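/- arXiv:2107.11727 — 5 statements merged into one kernel-verified Lean document; each statement's English description precedes it below -/
import Mathlib

section
/- Let Y be a positive tubal vector (each of its n tubal-scalar components is nonnegative and nonzero) and X a nonnegative tubal vector with X ≠ 0. Then Yᵀ * X = Σ_{i=1}^n y_iᵀ * x_i is a positive tubal scalar (nonnegative and nonzero). -/
open Finset

/-- The t-product (circular convolution) of tubal scalars of length `p`. -/
def tConv {p : ℕ} (a b : Fin p → ℝ) : Fin p → ℝ :=
  fun i => ∑ j : Fin p, a j * b (i - j)

/-- A tubal scalar is nonnegative if every entry is nonnegative. -/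
def TNonneg {p : ℕ} (a : Fin p → ℝ) : Prop := ∀ i, 0 ≤ a i

/-- A tubal scalar is positive if it is nonnegative and not identically zero. -/
def TPos {p : ℕ} (a : Fin p → ℝ) : Prop := TNonneg a ∧ a ≠ 0

/-- The transpose of a tubal scalar: keep the first entry, reverse entries 2 through p. -/
def tTrans {p : ℕ} (a : Fin p → ℝ) : Fin p → ℝ := fun i => a (-i)

/-! A positive tubal scalar has a positive entry, and for nonnegative `a`, `b` the
convolution satisfies `(a * b) (i + j) ≥ a i * b j`; so `y_iᵀ * x_i` is positive for
an index with `x_i ≠ 0`, and adding the other, nonnegative, summands cannot cancel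
its positive entry. -/

variable {p : ℕ}

theorem TPos.exists_pos {a : Fin p → ℝ} (ha : TPos a) : ∃ i, 0 < a i := by
  obtain ⟨i, hi⟩ := Function.ne_iff.mp ha.2
  exact ⟨i, (ha.1 i).lt_of_ne' hi⟩

theorem TNonneg.tPos_of_pos {a : Fin p → ℝ} (ha : TNonneg a) {i : Fin p} (hi : 0 < a i) :
    TPos a :=
  ⟨ha, fun h => hi.ne' (congrFun h i)⟩

theorem TNonneg.tTrans {a : Fin p → ℝ} (ha : TNonneg a) : TNonneg (tTrans a) :=
  fun i => ha (-i)

theorem TPos.tTrans {a : Fin p → ℝ} (ha : TPos a) : TPos (tTrans a) := by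
  obtain ⟨i, hi⟩ := ha.exists_pos
  exact ha.1.tTrans.tPos_of_pos (i := -i) (by simpa [_root_.tTrans] using hi)

theorem TNonneg.tConv {a b : Fin p → ℝ} (ha : TNonneg a) (hb : TNonneg b) :
    TNonneg (tConv a b) :=
  fun _ => sum_nonneg fun j _ => mul_nonneg (ha j) (hb _)

theorem mul_le_tConv_add {a b : Fin p → ℝ} (ha : TNonneg a) (hb : TNonneg b) (i j : Fin p) :
    a i * b j ≤ tConv a b (i + j) := by
  -- `Fin p` is an additive group only once `p ≠ 0`
  have : NeZero p := ⟨i.pos.ne'⟩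
  have hterm := single_le_sum (fun k _ => mul_nonneg (ha k) (hb (i + j - k))) (mem_univ i)
  rwa [add_sub_cancel_left] at hterm

theorem TPos.tConv {a b : Fin p → ℝ} (ha : TPos a) (hb : TPos b) : TPos (tConv a b) := by
  obtain ⟨i, hi⟩ := ha.exists_pos
  obtain ⟨j, hj⟩ := hb.exists_pos
  exact (ha.1.tConv hb.1).tPos_of_pos ((mul_pos hi hj).trans_le (mul_le_tConv_add ha.1 hb.1 i j))

theorem TNonneg.sum {ι : Type*} {s : Finset ι} {f : ι → Fin p → ℝ}
    (hf : ∀ i ∈ s, TNonneg (f i)) : TNonneg (∑ i ∈ s, f i) := fun k => by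
  rw [Finset.sum_apply]
  exact sum_nonneg fun i hi => hf i hi k

theorem TPos.sum {ι : Type*} {s : Finset ι} {f : ι → Fin p → ℝ}
    (hf : ∀ i ∈ s, TNonneg (f i)) {i₀ : ι} (hi₀ : i₀ ∈ s) (hpos : TPos (f i₀)) :
    TPos (∑ i ∈ s, f i) := by
  obtain ⟨k, hk⟩ := hpos.exists_pos
  refine (TNonneg.sum hf).tPos_of_pos (i := k) ?_
  rw [Finset.sum_apply]
  exact hk.trans_le (single_le_sum (fun i hi => hf i hi k) hi₀)

/-- If `Y` is a positive tubal vector and `X` a nonnegative nonzero tubal vector,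
then `Yᵀ * X = Σ_i y_iᵀ * x_i` is a positive tubal scalar. -/
theorem tT_mul_pos {n p : ℕ} (Y X : Fin n → Fin p → ℝ)
    (hY : ∀ i, TPos (Y i)) (hX : ∀ i, TNonneg (X i)) (hX0 : X ≠ 0) :
    TPos (∑ i : Fin n, tConv (tTrans (Y i)) (X i)) := by
  obtain ⟨i₀, hXi₀⟩ := Function.ne_iff.mp hX0
  exact TPos.sum (fun i _ => (hY i).1.tTrans.tConv (hX i)) (mem_univ i₀)
    ((hY i₀).tTrans.tConv ⟨hX i₀, hXi₀⟩)
end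

section
/- Let A be a nonnegative n×n tubal matrix with A ≠ 0. Then the spectral radius ρ(A) (over all t-eigenvalues) is itself a t-eigenvalue of A, and there is a nonnegative nonzero tubal vector X with A * X = ρ(A) X. -/
open Finset

/-- The t-product (circular convolution) of complex tubal scalars of length `p`. -/
noncomputable def tConvC {p : ℕ} (a b : Fin p → ℂ) : Fin p → ℂ :=
  fun i => ∑ j : Fin p, a j * b (i - j)

/-- A tubal scalar is strongly positive if every entry is strictly positive. -/
def TSPos {p : ℕ} (a : Fin p → ℝ) : Prop := ∀ i, 0 < a i

/-- The product of a tubal matrix and a tubal vector: `(A * X)_i = Σ_j a_{ij} * x_j`. -/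
def tMatVec {n p : ℕ} (A : Fin n → Fin n → Fin p → ℝ) (X : Fin n → Fin p → ℝ) :
    Fin n → Fin p → ℝ :=
  fun i => ∑ j : Fin n, tConv (A i j) (X j)

/-- A tubal matrix is reducible if some nonempty proper index set `I` satisfies
`a_{ij} = 0` for all `i ∈ I`, `j ∉ I`. -/
def TReducible {n p : ℕ} (A : Fin n → Fin n → Fin p → ℝ) : Prop :=
  ∃ I : Finset (Fin n), I.Nonempty ∧ I ≠ Finset.univ ∧ ∀ i ∈ I, ∀ j ∉ I, A i j = 0

/-- The t-spectrum of a real tubal matrix: complex `λ` with `A * X = λ X` for some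
nonzero complex tubal vector `X`. -/
def tSpec {n p : ℕ} (A : Fin n → Fin n → Fin p → ℝ) : Set ℂ :=
  {l | ∃ X : Fin n → Fin p → ℂ, X ≠ 0 ∧
    (fun i => ∑ j : Fin n, tConvC (fun k => (A i j k : ℂ)) (X j)) = l • X}

/-- The spectral radius over all t-eigenvalues. -/
noncomputable def tRho {n p : ℕ} (A : Fin n → Fin n → Fin p → ℝ) : ℝ :=
  sSup ((fun z : ℂ => ‖z‖) '' tSpec A)

/-!
The t-product is multiplication by the block-circulant matrix `bcirc A`, so the t-eigenvalues
are the eigenvalues of `bcirc A`, and it suffices to prove the weak Perron–Frobenius theorem for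
a nonnegative real matrix `M`.

Let `l` be an eigenvalue of maximal modulus `ρ`, with eigenvector `x`. By the triangle inequality
`w = |x|` satisfies `M w ≥ ρ w`. For `t > ρ`, Gelfand's formula makes the Neumann series
`∑ Mᵏ / tᵏ⁺¹` converge, so `(t - M)⁻¹` is entrywise nonnegative; applied to
`(t - ρ) w - (t - M) w ≥ 0` it gives `(t - ρ) y ≥ w` for `y = (t - M)⁻¹ w`. Normalised to the
standard simplex, `y` is an eigenvector for `ρ` up to an error `t - ρ`, and compactness of the
simplex yields an exact nonnegative eigenvector.
-/

open Filter Matrix Function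

lemma spectrum.eventually_norm_pow_le {A : Type*} [NormedRing A] [NormedAlgebra ℂ A]
    [CompleteSpace A] {a : A} {r : ℝ} (h : spectralRadius ℂ a < ENNReal.ofReal r) :
    ∀ᶠ n in atTop, ‖a ^ n‖ ≤ r ^ n := by
  filter_upwards [(spectrum.pow_norm_pow_one_div_tendsto_nhds_spectralRadius a).eventually_lt_const h,
    eventually_ne_atTop 0] with n hn hn0
  have hr : 0 < r := ENNReal.ofReal_pos.mp (pos_of_gt hn)
  rw [ENNReal.ofReal_lt_ofReal_iff hr, one_div] at hn
  calc ‖a ^ n‖ = (‖a ^ n‖ ^ (n⁻¹ : ℝ)) ^ n := (Real.rpow_inv_natCast_pow (norm_nonneg _) hn0).symm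
    _ ≤ r ^ n := pow_le_pow_left₀ (by positivity) hn.le n

lemma IsCompact.exists_eq_zero_of_forall_exists_norm_le {X E : Type*} [TopologicalSpace X]
    [NormedAddCommGroup E] {K : Set X} (hK : IsCompact K) {f : X → E} (hf : ContinuousOn f K)
    (h : ∀ ε > 0, ∃ x ∈ K, ‖f x‖ ≤ ε) : ∃ x ∈ K, f x = 0 := by
  obtain ⟨x₀, hx₀K, -⟩ := h 1 one_pos
  obtain ⟨x, hxK, hmin⟩ := hK.exists_isMinOn ⟨x₀, hx₀K⟩ hf.norm
  refine ⟨x, hxK, norm_le_zero_iff.mp (le_of_forall_pos_le_add fun ε hε => ?_)⟩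
  obtain ⟨y, hyK, hy⟩ := h ε hε
  linarith [isMinOn_iff.mp hmin y hyK]

lemma Fin.sum_mul_apply_sub_comm {R : Type*} [CommSemiring R] {p : ℕ} (a b : Fin p → R)
    (k : Fin p) : ∑ j, a j * b (k - j) = ∑ j, a (k - j) * b j := by
  rcases p with _ | p
  · simp
  · exact Fintype.sum_equiv (Equiv.subLeft k) _ _ fun j => by simp [sub_sub_cancel]

namespace Matrix

variable {ι : Type*} [Fintype ι]

lemma norm_mul_norm_le_mulVec_norm {M : Matrix ι ι ℝ} (hM : ∀ i j, 0 ≤ M i j) {x : ι → ℂ}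
    {l : ℂ} (hx : M.map Complex.ofReal *ᵥ x = l • x) (i : ι) :
    ‖l‖ * ‖x i‖ ≤ (M *ᵥ fun j => ‖x j‖) i :=
  calc ‖l‖ * ‖x i‖ = ‖∑ j, (M i j : ℂ) * x j‖ := by
        rw [← norm_mul, ← smul_eq_mul, ← Pi.smul_apply, ← hx]; rfl
    _ ≤ ∑ j, ‖(M i j : ℂ) * x j‖ := norm_sum_le _ _
    _ = (M *ᵥ fun j => ‖x j‖) i := by
        simp [mulVec, dotProduct, Complex.norm_real, abs_of_nonneg (hM _ _)]

variable [DecidableEq ι]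

lemma mem_spectrum_iff_exists_mulVec_eq_smul {K : Type*} [Field K] {A : Matrix ι ι K} {z : K} :
    z ∈ spectrum K A ↔ ∃ v ≠ 0, A *ᵥ v = z • v := by
  rw [spectrum.mem_iff, isUnit_iff_isUnit_det, isUnit_iff_ne_zero, not_not,
    ← exists_mulVec_eq_zero_iff, Algebra.algebraMap_eq_smul_one]
  simp only [sub_mulVec, smul_mulVec, one_mulVec, sub_eq_zero, eq_comm]

lemma ofReal_mem_spectrum_map_of_mulVec_eq_smul {M : Matrix ι ι ℝ} {u : ι → ℝ} {r : ℝ}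
    (hu : u ≠ 0) (hMu : M *ᵥ u = r • u) : (r : ℂ) ∈ spectrum ℂ (M.map Complex.ofReal) := by
  refine mem_spectrum_iff_exists_mulVec_eq_smul.mpr ⟨(↑) ∘ u, ?_, funext fun i => ?_⟩
  · exact fun h => hu (funext fun i => by simpa using congrFun h i)
  · simpa [mulVec, dotProduct] using congrArg Complex.ofReal (congrFun hMu i)

section LinftyOpNorm

attribute [local instance] Matrix.linftyOpNormedRing Matrix.linftyOpNormedAlgebra
  Matrix.linftyOpNormSMulClass

lemma spectrum_nonempty [Nonempty ι] (A : Matrix ι ι ℂ) : (spectrum ℂ A).Nonempty :=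
  spectrum.nonempty A

lemma linfty_opNorm_map_ofReal (X : Matrix ι ι ℝ) : ‖X.map Complex.ofReal‖ = ‖X‖ := by
  simp [linfty_opNorm_def]

lemma summable_inv_smul_pow {M : Matrix ι ι ℝ} {t : ℝ}
    (h : spectralRadius ℂ (M.map Complex.ofReal) < ENNReal.ofReal t) :
    Summable fun n => (t⁻¹ • M) ^ n := by
  obtain ⟨r, hr0, hMr, hrt⟩ := ENNReal.lt_iff_exists_real_btwn.mp h
  have ht : 0 < t := ENNReal.ofReal_pos.mp (pos_of_gt hrt)
  refine .of_norm_bounded_eventually_nat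
    (summable_geometric_of_lt_one (by positivity)
      ((div_lt_one ht).mpr ((ENNReal.ofReal_lt_ofReal_iff ht).mp hrt))) ?_
  filter_upwards [spectrum.eventually_norm_pow_le hMr] with n hn
  have hpow : (M ^ n).map Complex.ofReal = M.map Complex.ofReal ^ n :=
    M.map_pow Complex.ofRealHom n
  rw [smul_pow, norm_smul, ← linfty_opNorm_map_ofReal, hpow, norm_pow,
    norm_inv, Real.norm_of_nonneg ht.le, div_pow, div_eq_inv_mul, inv_pow]
  exact mul_le_mul_of_nonneg_left hn (by positivity)

end LinftyOpNorm

lemma exists_nonneg_mul_smul_one_sub_eq_one {M : Matrix ι ι ℝ} (hM : ∀ i j, 0 ≤ M i j) {t : ℝ}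
    (h : spectralRadius ℂ (M.map Complex.ofReal) < ENNReal.ofReal t) :
    ∃ R : Matrix ι ι ℝ, (∀ i j, 0 ≤ R i j) ∧ R * (t • 1 - M) = 1 := by
  have ht : 0 < t := ENNReal.ofReal_pos.mp (pos_of_gt h)
  have hs := summable_inv_smul_pow h
  refine ⟨t⁻¹ • ∑' n, (t⁻¹ • M) ^ n, fun i j => ?_, ?_⟩
  · have hij : HasSum (fun n => ((t⁻¹ • M) ^ n) i j) ((∑' n, (t⁻¹ • M) ^ n) i j) :=
      Pi.hasSum.mp (Pi.hasSum.mp hs.hasSum i) j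
    have hX : ∀ i j, 0 ≤ (t⁻¹ • M) i j := fun i j => mul_nonneg (by positivity) (hM i j)
    exact mul_nonneg (by positivity) (hij.nonneg fun n => pow_apply_nonneg hX n i j)
  · rw [show t • (1 : Matrix ι ι ℝ) - M = t • (1 - t⁻¹ • M) by
      rw [smul_sub, smul_smul, mul_inv_cancel₀ ht.ne', one_smul],
      smul_mul_smul_comm, inv_mul_cancel₀ ht.ne', one_smul, hs.tsum_pow_mul_one_sub]

lemma le_mul_mulVec_of_mul_le_mulVec {M R : Matrix ι ι ℝ} {w : ι → ℝ} {ρ t : ℝ}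
    (hR0 : ∀ i j, 0 ≤ R i j) (hR : R * (t • 1 - M) = 1) (hMw : ∀ i, ρ * w i ≤ (M *ᵥ w) i)
    (i : ι) : w i ≤ (t - ρ) * (R *ᵥ w) i := by
  have hd : ∀ j, 0 ≤ ((t - ρ) • w - (t • 1 - M) *ᵥ w : ι → ℝ) j := fun j => by
    simp only [Pi.sub_apply, Pi.smul_apply, sub_mulVec, smul_mulVec, one_mulVec, smul_eq_mul]
    linarith [hMw j]
  have h : R *ᵥ ((t - ρ) • w - (t • 1 - M) *ᵥ w) = (t - ρ) • (R *ᵥ w) - w := by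
    rw [mulVec_sub, mulVec_smul, mulVec_mulVec, hR, one_mulVec]
  have hRd : 0 ≤ (R *ᵥ ((t - ρ) • w - (t • 1 - M) *ᵥ w)) i :=
    sum_nonneg fun j _ => mul_nonneg (hR0 i j) (hd j)
  rw [h] at hRd
  simpa using hRd

lemma exists_mem_stdSimplex_norm_mulVec_sub_smul_le {M R : Matrix ι ι ℝ} {w : ι → ℝ} {ρ t : ℝ}
    (hR0 : ∀ i j, 0 ≤ R i j) (hR : R * (t • 1 - M) = 1) (hw0 : ∀ i, 0 ≤ w i) (hw : w ≠ 0)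
    (hMw : ∀ i, ρ * w i ≤ (M *ᵥ w) i) :
    ∃ u ∈ stdSimplex ℝ ι, ‖M *ᵥ u - ρ • u‖ ≤ t - ρ := by
  set y := R *ᵥ w
  have hy0 : ∀ i, 0 ≤ y i := fun i => sum_nonneg fun j _ => mul_nonneg (hR0 i j) (hw0 j)
  have hwy : ∀ i, w i ≤ (t - ρ) * y i := le_mul_mulVec_of_mul_le_mulVec hR0 hR hMw
  have hMy : M *ᵥ y = t • y - w := by
    have h : (t • 1 - M) *ᵥ y = w := by
      rw [mulVec_mulVec, mul_eq_one_comm.mp hR, one_mulVec]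
    rw [sub_mulVec, smul_mulVec, one_mulVec] at h
    rw [← h, sub_sub_cancel]
  obtain ⟨i₀, hi₀⟩ : ∃ i, 0 < w i := by
    by_contra! h
    exact hw (funext fun i => le_antisymm (h i) (hw0 i))
  have hyi₀ : 0 < (t - ρ) * y i₀ := hi₀.trans_le (hwy i₀)
  have htρ : 0 ≤ t - ρ := by nlinarith [hy0 i₀]
  set s := ∑ i, y i
  have hy_le : ∀ i, y i ≤ s := fun i => single_le_sum (fun j _ => hy0 j) (mem_univ i)
  have hs : 0 < s := lt_of_lt_of_le (pos_of_mul_pos_right hyi₀ htρ) (hy_le i₀)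
  refine ⟨s⁻¹ • y, ⟨fun i => mul_nonneg (by positivity) (hy0 i), ?_⟩, ?_⟩
  · simp [← mul_sum, s, hs.ne']
  rw [pi_norm_le_iff_of_nonneg htρ]
  intro i
  have hres : (M *ᵥ (s⁻¹ • y) - ρ • s⁻¹ • y) i = s⁻¹ * ((t - ρ) * y i - w i) := by
    simp only [mulVec_smul, hMy, Pi.sub_apply, Pi.smul_apply, smul_eq_mul]
    ring
  rw [hres, Real.norm_eq_abs, abs_le]
  constructor
  · nlinarith [hwy i, inv_pos.mpr hs]
  · calc s⁻¹ * ((t - ρ) * y i - w i) ≤ s⁻¹ * ((t - ρ) * s) := by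
          gcongr; nlinarith [hy_le i, hw0 i]
      _ = t - ρ := by field_simp

theorem exists_mem_stdSimplex_mulVec_eq_norm_smul {M : Matrix ι ι ℝ} (hM : ∀ i j, 0 ≤ M i j)
    {l : ℂ} (hl : l ∈ spectrum ℂ (M.map Complex.ofReal))
    (hmax : ∀ z ∈ spectrum ℂ (M.map Complex.ofReal), ‖z‖ ≤ ‖l‖) :
    ∃ u ∈ stdSimplex ℝ ι, M *ᵥ u = ‖l‖ • u := by
  obtain ⟨x, hx0, hx⟩ := mem_spectrum_iff_exists_mulVec_eq_smul.mp hl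
  have hw : (fun i => ‖x i‖) ≠ 0 := fun h => hx0 (funext fun i => norm_eq_zero.mp (congrFun h i))
  have hsr : spectralRadius ℂ (M.map Complex.ofReal) ≤ ENNReal.ofReal ‖l‖ :=
    iSup₂_le fun z hz => by
      rw [← enorm_eq_nnnorm, ← ofReal_norm]
      exact ENNReal.ofReal_le_ofReal (hmax z hz)
  suffices h : ∀ ε > 0, ∃ u ∈ stdSimplex ℝ ι, ‖M *ᵥ u - ‖l‖ • u‖ ≤ ε by
    obtain ⟨u, hu, hMu⟩ := (isCompact_stdSimplex ℝ ι).exists_eq_zero_of_forall_exists_norm_le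
      (f := fun u => M *ᵥ u - ‖l‖ • u) (by fun_prop) h
    exact ⟨u, hu, sub_eq_zero.mp hMu⟩
  intro ε hε
  obtain ⟨R, hR0, hR⟩ := exists_nonneg_mul_smul_one_sub_eq_one hM (t := ‖l‖ + ε)
    (hsr.trans_lt ((ENNReal.ofReal_lt_ofReal_iff (by positivity)).mpr (by linarith)))
  simpa using exists_mem_stdSimplex_norm_mulVec_sub_smul_le hR0 hR (fun i => norm_nonneg (x i))
    hw (norm_mul_norm_le_mulVec_norm hM hx)

end Matrix

/-- The block-circulant matrix `bcirc(A)`, with rows and columns indexed by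
(tube index, position in the tube). -/
def bcirc {n p : ℕ} (A : Fin n → Fin n → Fin p → ℝ) : Matrix (Fin n × Fin p) (Fin n × Fin p) ℝ :=
  Matrix.of fun x y => A x.1 y.1 (x.2 - y.2)

section Tubal

variable {n p : ℕ} (A : Fin n → Fin n → Fin p → ℝ)

lemma bcirc_nonneg (hA : ∀ i j, TNonneg (A i j)) (x y : Fin n × Fin p) : 0 ≤ bcirc A x y :=
  hA _ _ _

lemma uncurry_tMatVec (X : Fin n → Fin p → ℝ) :
    uncurry (tMatVec A X) = bcirc A *ᵥ uncurry X := by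
  ext ⟨i, k⟩
  simp only [uncurry_apply_pair, tMatVec, Finset.sum_apply, tConv, mulVec, dotProduct,
    Fintype.sum_prod_type, bcirc, of_apply]
  exact sum_congr rfl fun j _ => Fin.sum_mul_apply_sub_comm _ _ k

lemma uncurry_tMatVecC (X : Fin n → Fin p → ℂ) :
    uncurry (fun i => ∑ j, tConvC (fun k => (A i j k : ℂ)) (X j)) =
      (bcirc A).map Complex.ofReal *ᵥ uncurry X := by
  ext ⟨i, k⟩
  simp only [uncurry_apply_pair, Finset.sum_apply, tConvC, mulVec, dotProduct,
    Fintype.sum_prod_type, bcirc, map_apply, of_apply]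
  exact sum_congr rfl fun j _ => Fin.sum_mul_apply_sub_comm _ _ k

lemma tSpec_eq_spectrum : tSpec A = spectrum ℂ ((bcirc A).map Complex.ofReal) := by
  ext z
  rw [mem_spectrum_iff_exists_mulVec_eq_smul]
  constructor
  · rintro ⟨X, hX, hAX⟩
    exact ⟨uncurry X, uncurry_injective.ne hX, by rw [← uncurry_tMatVecC, hAX]; rfl⟩
  · rintro ⟨v, hv, hAv⟩
    refine ⟨curry v, fun h => hv (by rw [← uncurry_curry v, h]; rfl), uncurry_injective ?_⟩
    rw [uncurry_tMatVecC, uncurry_curry, hAv]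
    rfl

lemma tRho_eq_norm {l : ℂ} (hl : l ∈ spectrum ℂ ((bcirc A).map Complex.ofReal))
    (hmax : ∀ z ∈ spectrum ℂ ((bcirc A).map Complex.ofReal), ‖z‖ ≤ ‖l‖) : tRho A = ‖l‖ := by
  rw [tRho, tSpec_eq_spectrum]
  exact IsGreatest.csSup_eq ⟨Set.mem_image_of_mem _ hl, by rintro _ ⟨z, hz, rfl⟩; exact hmax z hz⟩

lemma nonempty_of_ne_zero (hA0 : A ≠ 0) : Nonempty (Fin n × Fin p) := by
  by_contra h
  exact hA0 (funext fun i => funext fun j => funext fun k => (h ⟨(i, k)⟩).elim)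

end Tubal

/-- Perron–Frobenius for nonnegative tubal matrices: if `A` is nonnegative and
nonzero, then `ρ(A)` is a t-eigenvalue of `A`, with a nonnegative nonzero
t-eigenvector. -/
theorem pf_nonneg_tubal {n p : ℕ} (A : Fin n → Fin n → Fin p → ℝ)
    (hA : ∀ i j, TNonneg (A i j)) (hA0 : A ≠ 0) :
    ((tRho A : ℂ) ∈ tSpec A) ∧
      ∃ X : Fin n → Fin p → ℝ, (∀ i, TNonneg (X i)) ∧ X ≠ 0 ∧
        tMatVec A X = fun i => tRho A • X i := by
  have := nonempty_of_ne_zero A hA0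
  obtain ⟨l, hl, hmax⟩ := Set.exists_max_image _ (‖·‖) (Set.toFinite _)
    (spectrum_nonempty ((bcirc A).map Complex.ofReal))
  have hρ : tRho A = ‖l‖ := tRho_eq_norm A hl hmax
  obtain ⟨u, ⟨hu0, hu1⟩, hu⟩ :=
    (bcirc A).exists_mem_stdSimplex_mulVec_eq_norm_smul (bcirc_nonneg A hA) hl hmax
  have hu_ne : u ≠ 0 := by
    rintro rfl
    simp at hu1
  refine ⟨?_, curry u, fun i k => hu0 (i, k), fun h => hu_ne ?_, uncurry_injective ?_⟩
  · rw [tSpec_eq_spectrum, hρ]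
    exact ofReal_mem_spectrum_map_of_mulVec_eq_smul hu_ne hu
  · rw [← uncurry_curry u, h]
    rfl
  · rw [uncurry_tMatVec, uncurry_curry, hu, hρ]
    rfl
end

section
/- Let A be a nonnegative irreducible n×n tubal matrix, and let X be a nonnegative nonzero tubal vector that is a t-eigenvector of A (A * X = λX for some λ). Then X is positive: every one of its n tubal scalar components is nonzero. -/
open Finset

/-
The zero set `I = {i | X i = 0}` of a nonnegative t-eigenvector is invariant: for `i ∈ I` the
`i`-th row of `A * X = λ X` is a vanishing sum of nonnegative t-products `a_{ij} * x_j`, so each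
vanishes, and a t-product of nonnegative tubal scalars with `x_j ≠ 0` vanishes only if
`a_{ij} = 0`. If `X` had a zero component, `I` would witness the reducibility of `A`.
-/

theorem tConv_nonneg {p : ℕ} {a b : Fin p → ℝ} (ha : TNonneg a) (hb : TNonneg b) :
    TNonneg (tConv a b) :=
  fun _ => sum_nonneg fun j _ => mul_nonneg (ha j) (hb _)

theorem eq_zero_of_tConv_eq_zero {p : ℕ} {a b : Fin p → ℝ} (ha : TNonneg a) (hb : TNonneg b)
    (hb0 : b ≠ 0) (hab : tConv a b = 0) : a = 0 := by
  obtain ⟨k₀, hk₀⟩ : ∃ k₀, 0 < b k₀ := by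
    by_contra! h
    exact hb0 (funext fun k => le_antisymm (h k) (hb k))
  have : NeZero p := NeZero.of_pos k₀.pos
  funext k
  -- `a k * b k₀` is one of the nonnegative terms of `(a * b) (k + k₀)`.
  have hterm : a k * b (k + k₀ - k) = 0 :=
    (sum_eq_zero_iff_of_nonneg fun j _ => mul_nonneg (ha j) (hb _)).mp
      (congrFun hab (k + k₀)) k (mem_univ k)
  rw [add_sub_cancel_left] at hterm
  exact (mul_eq_zero.mp hterm).resolve_right hk₀.ne'

theorem eq_zero_of_tMatVec_eq_zero {n p : ℕ} {A : Fin n → Fin n → Fin p → ℝ}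
    {X : Fin n → Fin p → ℝ} (hA : ∀ i j, TNonneg (A i j)) (hX : ∀ i, TNonneg (X i))
    {i j : Fin n} (hi : tMatVec A X i = 0) (hj : X j ≠ 0) : A i j = 0 := by
  have hrow : tConv (A i j) (X j) = 0 :=
    (sum_eq_zero_iff_of_nonneg fun j' _ => (tConv_nonneg (hA i j') (hX j'))).mp hi j (mem_univ j)
  exact eq_zero_of_tConv_eq_zero (hA i j) (hX j) hj hrow

/-- If `A` is nonnegative irreducible and `X` is a nonnegative nonzero t-eigenvector
of `A`, then `X` is positive: every tubal scalar component of `X` is nonzero. -/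
theorem nonneg_eigvec_pos {n p : ℕ} (A : Fin n → Fin n → Fin p → ℝ)
    (hA : ∀ i j, TNonneg (A i j)) (hirr : ¬ TReducible A)
    (X : Fin n → Fin p → ℝ) (hX : ∀ i, TNonneg (X i)) (hX0 : X ≠ 0)
    (l : ℝ) (heig : tMatVec A X = fun i => l • X i) :
    ∀ i, TPos (X i) := by
  intro i₀
  refine ⟨hX i₀, fun hi₀ => hirr ⟨univ.filter (X · = 0), ⟨i₀, by simpa using hi₀⟩, ?_, ?_⟩⟩
  · intro hI
    exact hX0 (funext fun j => by simpa using eq_univ_iff_forall.mp hI j)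
  · intro i hi j hj
    simp only [mem_filter, mem_univ, true_and] at hi hj
    exact eq_zero_of_tMatVec_eq_zero hA hX (by simp [heig, hi]) hj
end

section
/- Let A be a nonnegative, nonzero n×n tubal matrix that admits a positive left t-eigenvector Y (Aᵀ * Y = ρ(A) Y, with each component of Y nonnegative and nonzero). If X is a nonzero real tubal vector such that A * X − ρ(A) X is entrywise nonnegative, then A * X = ρ(A) X. -/
open Finset

/-- The transpose of a tubal matrix: `(Aᵀ)_{ij} = (a_{ji})ᵀ`. -/
def tMatTrans {n p : ℕ} (A : Fin n → Fin n → Fin p → ℝ) : Fin n → Fin n → Fin p → ℝ :=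
  fun i j => tTrans (A j i)

open Matrix

/-!
Summing the entries of each tube is multiplicative for the t-product and commutes with the
tubal transpose, so it sends `A`, `X`, `Y` to a real matrix `M`, a vector `x` and a positive
left eigenvector `y` of `M` for `ρ(A)`, with `M x - ρ x ≥ 0`. Pairing with `y` gives
`y ⬝ (M x - ρ x) = (yᵀ M) x - ρ (y ⬝ x) = 0`, so `M x = ρ x` entrywise. Hence every tube of
`A * X - ρ(A) X` is nonnegative with zero sum, i.e. zero.
-/

theorem Matrix.mulVec_eq_smul_of_sub_nonneg {ι R : Type*} [Fintype ι] [CommRing R]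
    [LinearOrder R] [IsStrictOrderedRing R] {M : Matrix ι ι R} {x y : ι → R} {r : R}
    (hy : ∀ i, 0 < y i) (hyM : y ᵥ* M = r • y) (hx : 0 ≤ M *ᵥ x - r • x) :
    M *ᵥ x = r • x := by
  have hpair : y ⬝ᵥ (M *ᵥ x - r • x) = 0 := by
    rw [dotProduct_sub, dotProduct_mulVec, hyM, dotProduct_smul, smul_dotProduct, sub_self]
  have hterms := (sum_eq_zero_iff_of_nonneg fun i _ => mul_nonneg (hy i).le (hx i)).mp hpair
  funext i
  have hi : y i * (M *ᵥ x - r • x) i = 0 := hterms i (mem_univ i)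
  exact sub_eq_zero.mp ((mul_eq_zero.mp hi).resolve_left (hy i).ne')

section TubeSum

variable {n p : ℕ}

lemma sum_tConv (a b : Fin p → ℝ) : ∑ k, tConv a b k = (∑ k, a k) * ∑ k, b k := by
  cases p with
  | zero => simp
  | succ p =>
    simp only [tConv]
    rw [sum_comm, sum_mul]
    refine sum_congr rfl fun j _ => ?_
    rw [← mul_sum]
    exact congrArg _ (Fintype.sum_equiv (Equiv.subRight j) _ _ fun k => rfl)

lemma sum_tTrans (a : Fin p → ℝ) : ∑ k, tTrans a k = ∑ k, a k := by
  cases p with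
  | zero => simp
  | succ p => exact Fintype.sum_equiv (Equiv.neg _) _ _ fun k => rfl

lemma sum_pos_of_tPos {a : Fin p → ℝ} (ha : TPos a) : 0 < ∑ k, a k := by
  obtain ⟨hnn, hne⟩ := ha
  obtain ⟨k, hk⟩ := Function.ne_iff.mp hne
  exact sum_pos' (fun k _ => hnn k) ⟨k, mem_univ k, (hnn k).lt_of_ne' hk⟩

lemma eq_zero_of_tNonneg_of_sum_eq_zero {a : Fin p → ℝ} (ha : TNonneg a)
    (hsum : ∑ k, a k = 0) : a = 0 :=
  funext fun k => (sum_eq_zero_iff_of_nonneg fun k _ => ha k).mp hsum k (mem_univ k)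

def tSumMat (A : Fin n → Fin n → Fin p → ℝ) : Matrix (Fin n) (Fin n) ℝ :=
  Matrix.of fun i j => ∑ k, A i j k

def tSumVec (X : Fin n → Fin p → ℝ) : Fin n → ℝ := fun i => ∑ k, X i k

lemma tSumVec_sub (X Z : Fin n → Fin p → ℝ) : tSumVec (X - Z) = tSumVec X - tSumVec Z := by
  funext i
  simp [tSumVec, sum_sub_distrib]

lemma tSumVec_smul (c : ℝ) (X : Fin n → Fin p → ℝ) : tSumVec (c • X) = c • tSumVec X := by
  funext i
  simp [tSumVec, mul_sum]

lemma tSumVec_tMatVec (A : Fin n → Fin n → Fin p → ℝ) (X : Fin n → Fin p → ℝ) :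
    tSumVec (tMatVec A X) = tSumMat A *ᵥ tSumVec X := by
  funext i
  simp only [tSumVec, tMatVec, Finset.sum_apply, mulVec, dotProduct, tSumMat, of_apply]
  rw [sum_comm]
  exact sum_congr rfl fun j _ => sum_tConv _ _

lemma tSumMat_tMatTrans (A : Fin n → Fin n → Fin p → ℝ) :
    tSumMat (tMatTrans A) = (tSumMat A)ᵀ := by
  ext i j
  exact sum_tTrans _

end TubeSum

theorem eig_of_subinvariant_general {n p : ℕ} (A : Fin n → Fin n → Fin p → ℝ)
    (Y : Fin n → Fin p → ℝ) (hY : ∀ i, TPos (Y i))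
    (hYeig : tMatVec (tMatTrans A) Y = fun i => tRho A • Y i)
    (X : Fin n → Fin p → ℝ)
    (hsub : ∀ i, TNonneg (fun k => tMatVec A X i k - tRho A • X i k)) :
    tMatVec A X = fun i => tRho A • X i := by
  set ρ := tRho A
  have hyM : tSumVec Y ᵥ* tSumMat A = ρ • tSumVec Y := by
    rw [← mulVec_transpose, ← tSumMat_tMatTrans, ← tSumVec_tMatVec, hYeig]
    exact tSumVec_smul ρ Y
  have hdiff : tSumVec (tMatVec A X - ρ • X) = tSumMat A *ᵥ tSumVec X - ρ • tSumVec X := by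
    rw [tSumVec_sub, tSumVec_smul, tSumVec_tMatVec]
  have hnonneg : 0 ≤ tSumMat A *ᵥ tSumVec X - ρ • tSumVec X := by
    rw [← hdiff]
    exact fun i => sum_nonneg fun k _ => hsub i k
  have hzero : tSumVec (tMatVec A X - ρ • X) = 0 := by
    rw [hdiff, sub_eq_zero]
    exact mulVec_eq_smul_of_sub_nonneg (fun i => sum_pos_of_tPos (hY i)) hyM hnonneg
  funext i
  exact sub_eq_zero.mp (eq_zero_of_tNonneg_of_sum_eq_zero (hsub i) (congrFun hzero i))

/-- Let `A` be nonnegative and nonzero with a positive left t-eigenvector `Y` for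
`ρ(A)`. If `X ≠ 0` and `A * X − ρ(A) X` is entrywise nonnegative, then
`A * X = ρ(A) X`. -/
theorem eig_of_subinvariant {n p : ℕ} (A : Fin n → Fin n → Fin p → ℝ)
    (hA : ∀ i j, TNonneg (A i j)) (hA0 : A ≠ 0)
    (Y : Fin n → Fin p → ℝ) (hY : ∀ i, TPos (Y i))
    (hYeig : tMatVec (tMatTrans A) Y = fun i => tRho A • Y i)
    (X : Fin n → Fin p → ℝ) (hX0 : X ≠ 0)
    (hsub : ∀ i, TNonneg (fun k => tMatVec A X i k - tRho A • X i k)) :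
    tMatVec A X = fun i => tRho A • X i :=
  eig_of_subinvariant_general A Y hY hYeig X hsub
end

section
/- Let A be a nonnegative irreducible n×n tubal matrix that contains at least one strongly positive entry a_{ij} (every real entry of a_{ij} strictly positive). Then every nonzero nonnegative t-eigenvector of A is strongly positive, and any two strongly positive t-eigenvectors corresponding to ρ(A) differ by a positive scalar multiple. -/
open Finset

/-!
Unfold the `n × n` tubal matrix into the real `np × np` matrix `M` whose `(i, j)` block is the
circulant matrix of `a_{ij}`; then `A * X = λ X` becomes `M x = λ x` for the stacked vector `x`.
Irreducibility lets every block row reach the block row of the strongly positive entry and be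
reached from its block column, and a strongly positive block connects every index of the former
to every index of the latter, so the positivity graph of `M` is strongly connected. For such a
nonnegative matrix, a zero entry of a nonnegative eigenvector propagates along the edges, so a
nonzero one has no zero entry. Given two positive eigenvectors `x`, `y` for the same eigenvalue,
`x - c y` with `c = min x_k / y_k` is a nonnegative eigenvector with a zero entry, hence vanishes.
-/

open Finset Matrix Relation

namespace Matrix

variable {ι : Type*} [Fintype ι] {M : Matrix ι ι ℝ} {x y : ι → ℝ} {r : ℝ}

theorem eq_zero_of_reflTransGen_of_mulVec_eq_smul (hM : ∀ i j, 0 ≤ M i j) (hx : 0 ≤ x)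
    (heig : M *ᵥ x = r • x) {a b : ι} (hab : ReflTransGen (fun i j => 0 < M i j) a b)
    (ha : x a = 0) : x b = 0 := by
  induction hab with
  | refl => exact ha
  | @tail c b _ hcb hc =>
    have hrow : ∑ j, M c j * x j = 0 := by
      simpa [hc, mulVec, dotProduct] using congrFun heig c
    have hterm :=
      (Fintype.sum_eq_zero_iff_of_nonneg fun j => mul_nonneg (hM c j) (hx j)).1 hrow
    exact (mul_eq_zero.1 (congrFun hterm b)).resolve_left hcb.ne'

theorem pos_of_mulVec_eq_smul (hM : ∀ i j, 0 ≤ M i j)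
    (hconn : ∀ i j, ReflTransGen (fun i j => 0 < M i j) i j) (hx : 0 ≤ x) (hx0 : x ≠ 0)
    (heig : M *ᵥ x = r • x) (i : ι) : 0 < x i := by
  refine (hx i).lt_of_ne fun hi => hx0 (funext fun j => ?_)
  exact eq_zero_of_reflTransGen_of_mulVec_eq_smul hM hx heig (hconn i j) hi.symm

theorem exists_pos_smul_eq_of_mulVec_eq_smul (hM : ∀ i j, 0 ≤ M i j)
    (hconn : ∀ i j, ReflTransGen (fun i j => 0 < M i j) i j) (hx : ∀ i, 0 < x i)
    (hy : ∀ i, 0 < y i) (hxe : M *ᵥ x = r • x) (hye : M *ᵥ y = r • y) :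
    ∃ c : ℝ, 0 < c ∧ x = c • y := by
  cases isEmpty_or_nonempty ι
  · exact ⟨1, one_pos, Subsingleton.elim _ _⟩
  obtain ⟨i₀, hi₀⟩ := Finite.exists_min fun i => x i / y i
  set c := x i₀ / y i₀
  refine ⟨c, div_pos (hx i₀) (hy i₀), sub_eq_zero.1 ?_⟩
  by_contra hne
  have hnonneg : 0 ≤ x - c • y := fun i => by
    simpa [mul_comm c] using (le_div_iff₀ (hy i)).1 (hi₀ i)
  have heig : M *ᵥ (x - c • y) = r • (x - c • y) := by
    rw [mulVec_sub, mulVec_smul, hxe, hye, smul_sub, smul_comm]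
  have hpos := pos_of_mulVec_eq_smul hM hconn hnonneg hne heig i₀
  simp [c, div_mul_cancel₀ _ (hy i₀).ne'] at hpos

end Matrix

section Tubal

variable {n p : ℕ} {A : Fin n → Fin n → Fin p → ℝ}

def tUnfold (A : Fin n → Fin n → Fin p → ℝ) :
    Matrix (Fin n × Fin p) (Fin n × Fin p) ℝ :=
  fun a b => A a.1 b.1 (a.2 - b.2)

theorem tMatVec_apply_eq_tUnfold_mulVec [NeZero p] (X : Fin n → Fin p → ℝ) (i : Fin n)
    (k : Fin p) : tMatVec A X i k = (tUnfold A *ᵥ Function.uncurry X) (i, k) := by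
  simp only [tMatVec, tConv, Finset.sum_apply, mulVec, dotProduct, Fintype.sum_prod_type,
    tUnfold, Function.uncurry_apply_pair]
  refine Finset.sum_congr rfl fun j _ => ?_
  rw [← (Equiv.subLeft k).sum_comp]
  simp only [Equiv.subLeft_apply, sub_sub_cancel]

theorem tMatVec_eq_smul_iff [NeZero p] (X : Fin n → Fin p → ℝ) (l : ℝ) :
    tMatVec A X = (fun i => l • X i) ↔
      tUnfold A *ᵥ Function.uncurry X = l • Function.uncurry X := by
  simp only [funext_iff, Prod.forall, tMatVec_apply_eq_tUnfold_mulVec, Pi.smul_apply,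
    Function.uncurry_apply_pair]

theorem reflTransGen_ne_zero_of_not_tReducible (hirr : ¬ TReducible A) (i j : Fin n) :
    ReflTransGen (fun i j => A i j ≠ 0) i j := by
  classical
  by_contra hij
  set I := univ.filter (ReflTransGen (fun i j => A i j ≠ 0) i)
  refine hirr ⟨I, ⟨i, by simp [I, ReflTransGen.refl]⟩, fun hI => hij ?_,
    fun a ha b hb => ?_⟩
  · have hj : j ∈ I := hI ▸ mem_univ j
    simpa [I] using hj
  · simp only [I, mem_filter, mem_univ, true_and] at ha hb
    exact not_not.1 fun hab => hb (ha.tail hab)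

variable [NeZero p]

theorem reflTransGen_tUnfold_exists_target (hA : ∀ i j, TNonneg (A i j)) {a b : Fin n}
    (hab : ReflTransGen (fun i j => A i j ≠ 0) a b) (κ : Fin p) :
    ∃ κ', ReflTransGen (fun u v => 0 < tUnfold A u v) (a, κ) (b, κ') := by
  induction hab using ReflTransGen.head_induction_on generalizing κ with
  | refl => exact ⟨κ, .refl⟩
  | head hac _ ih =>
    obtain ⟨m, hm⟩ := Function.ne_iff.1 hac
    obtain ⟨κ', hκ'⟩ := ih (κ - m)
    refine ⟨κ', .head ?_ hκ'⟩
    simpa [tUnfold] using (hA _ _ m).lt_of_ne' hm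

theorem reflTransGen_tUnfold_exists_source (hA : ∀ i j, TNonneg (A i j)) {a b : Fin n}
    (hab : ReflTransGen (fun i j => A i j ≠ 0) a b) (κ' : Fin p) :
    ∃ κ, ReflTransGen (fun u v => 0 < tUnfold A u v) (a, κ) (b, κ') := by
  induction hab using ReflTransGen.head_induction_on with
  | refl => exact ⟨κ', .refl⟩
  | head hac _ ih =>
    obtain ⟨m, hm⟩ := Function.ne_iff.1 hac
    obtain ⟨κ, hκ⟩ := ih
    refine ⟨κ + m, .head ?_ hκ⟩
    simpa [tUnfold] using (hA _ _ m).lt_of_ne' hm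

theorem reflTransGen_tUnfold (hA : ∀ i j, TNonneg (A i j)) (hirr : ¬ TReducible A)
    (hsp : ∃ i j, TSPos (A i j)) (u v : Fin n × Fin p) :
    ReflTransGen (fun u v => 0 < tUnfold A u v) u v := by
  obtain ⟨i₀, j₀, hpos⟩ := hsp
  obtain ⟨s, hus⟩ := reflTransGen_tUnfold_exists_target hA
    (reflTransGen_ne_zero_of_not_tReducible hirr u.1 i₀) u.2
  obtain ⟨t, htv⟩ := reflTransGen_tUnfold_exists_source hA
    (reflTransGen_ne_zero_of_not_tReducible hirr j₀ v.1) v.2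
  exact hus.trans (.head (show 0 < tUnfold A (i₀, s) (j₀, t) from hpos (s - t)) htv)

end Tubal

/-- Let `A` be nonnegative irreducible containing at least one strongly positive
entry. Then every nonzero nonnegative t-eigenvector of `A` is strongly positive,
and any two strongly positive t-eigenvectors for `ρ(A)` differ by a positive
scalar multiple. -/
theorem enhanced_pf {n p : ℕ} (A : Fin n → Fin n → Fin p → ℝ)
    (hA : ∀ i j, TNonneg (A i j)) (hirr : ¬ TReducible A)
    (hsp : ∃ i j, TSPos (A i j)) :
    (∀ (X : Fin n → Fin p → ℝ) (l : ℝ), (∀ i, TNonneg (X i)) → X ≠ 0 →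
        tMatVec A X = (fun i => l • X i) → ∀ i, TSPos (X i)) ∧
    (∀ X Y : Fin n → Fin p → ℝ, (∀ i, TSPos (X i)) → (∀ i, TSPos (Y i)) →
        tMatVec A X = (fun i => tRho A • X i) → tMatVec A Y = (fun i => tRho A • Y i) →
        ∃ c : ℝ, 0 < c ∧ X = fun i k => c * Y i k) := by
  obtain rfl | _ := eq_zero_or_neZero p
  · exact ⟨fun _ _ _ _ _ _ k => k.elim0,
      fun _ _ _ _ _ _ => ⟨1, one_pos, funext fun _ => funext fun k => k.elim0⟩⟩
  have hM : ∀ u v, 0 ≤ tUnfold A u v := fun _ _ => hA _ _ _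
  have hconn := reflTransGen_tUnfold hA hirr hsp
  refine ⟨fun X l hX hX0 heig i k => ?_, fun X Y hX hY hXe hYe => ?_⟩
  · exact pos_of_mulVec_eq_smul hM hconn (fun u => hX u.1 u.2)
      (Function.uncurry_injective.ne hX0) ((tMatVec_eq_smul_iff X l).1 heig) (i, k)
  · obtain ⟨c, hc, hXY⟩ := exists_pos_smul_eq_of_mulVec_eq_smul hM hconn (fun u => hX u.1 u.2)
      (fun u => hY u.1 u.2) ((tMatVec_eq_smul_iff X _).1 hXe) ((tMatVec_eq_smul_iff Y _).1 hYe)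
    exact ⟨c, hc, funext fun i => funext fun k => congrFun hXY (i, k)⟩
end
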